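/- Let m, k be positive integers, let q > 0, c > 0 and 0 < λ ≤ 1/4 be reals with λ·m·q ≥ c, and let G be a bipartite graph with parts A, B of size m satisfying: (i) e_G(X,Y) ≥ (1−2λ)|X||Y|q for all X ⊆ A, Y ⊆ B with |X|,|Y| ≥ k; (ii) e_G(X,Y) ≤ min{|X|,|Y|}·c for all X ⊆ A, Y ⊆ B with |X| ≤ k and |Y| ≤ k; (iii) every vertex of G has degree at least (1−2λ)·m·q. Then e_G(X,Y) ≥ r·(|X|+|Y|−m) for every X ⊆ A and Y ⊆ B, where r = (1−4λ)·m·q; consequently (by the Gale–Ryser theorem), if r is an integer then G contains an r-regular spanning subgraph, and hence r pairwise edge-disjoint perfect matchings. -/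
import Mathlib


open Finset

/-- Degree in part `A` of a bipartite graph with parts `A = B = Fin m`. -/
def degA {m : ℕ} (G : Fin m → Fin m → Bool) (a : Fin m) : ℕ :=
  (Finset.univ.filter fun b => G a b = true).card

/-- Degree in part `B`. -/
def degB {m : ℕ} (G : Fin m → Fin m → Bool) (b : Fin m) : ℕ :=
  (Finset.univ.filter fun a => G a b = true).card

/-- The number `e_G(X,Y)` of edges between `X ⊆ A` and `Y ⊆ B`. -/
def eBip {m : ℕ} (G : Fin m → Fin m → Bool) (X Y : Finset (Fin m)) : ℕ :=
  ((X ×ˢ Y).filter fun e => G e.1 e.2 = true).card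

lemma eBip_eq_sum {m : ℕ} (G : Fin m → Fin m → Bool) (X Y : Finset (Fin m)) :
    eBip G X Y = ∑ a ∈ X, ∑ b ∈ Y, (if G a b = true then 1 else 0) := by
  rw [eBip, Finset.card_filter, Finset.sum_product]

lemma eBip_compl_right {m : ℕ} (G : Fin m → Fin m → Bool) (X Y : Finset (Fin m)) :
    eBip G X Y + eBip G X Yᶜ = ∑ a ∈ X, degA G a := by
  simp only [eBip_eq_sum, degA, Finset.card_filter, ← Finset.sum_add_distrib]
  congr 1; ext a
  exact Finset.sum_add_sum_compl Y _

lemma eBip_compl_left {m : ℕ} (G : Fin m → Fin m → Bool) (X Y : Finset (Fin m)) :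
    eBip G X Y + eBip G Xᶜ Y = ∑ b ∈ Y, degB G b := by
  have h : ∀ Z W : Finset (Fin m), eBip G Z W = ∑ b ∈ W, ∑ a ∈ Z, (if G a b = true then 1 else 0) := by
    intro Z W; rw [eBip_eq_sum, Finset.sum_comm]
  simp only [h, degB, Finset.card_filter, ← Finset.sum_add_distrib]
  congr 1; ext b
  exact Finset.sum_add_sum_compl X _


lemma part1 (m k : ℕ)
    (q c lam : ℝ) (hq : 0 < q) (hc : 0 < c) (hlam1 : 0 < lam) (hlam2 : lam ≤ 1 / 4)
    (hlmq : c ≤ lam * m * q)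
    (G : Fin m → Fin m → Bool)
    (hi : ∀ X Y : Finset (Fin m), k ≤ X.card → k ≤ Y.card →
      (1 - 2 * lam) * X.card * Y.card * q ≤ (eBip G X Y : ℝ))
    (hii : ∀ X Y : Finset (Fin m), X.card ≤ k → Y.card ≤ k →
      (eBip G X Y : ℝ) ≤ (min X.card Y.card : ℕ) * c)
    (hiii : ∀ a : Fin m, (1 - 2 * lam) * m * q ≤ (degA G a : ℝ))
    (hiii' : ∀ b : Fin m, (1 - 2 * lam) * m * q ≤ (degB G b : ℝ)) :
    ∀ X Y : Finset (Fin m),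
      (1 - 4 * lam) * m * q * ((X.card : ℝ) + (Y.card : ℝ) - m) ≤ (eBip G X Y : ℝ) := by
  intro X Y
  have hXm' : X.card ≤ m := by simpa using Finset.card_le_card (Finset.subset_univ X)
  have hYm' : Y.card ≤ m := by simpa using Finset.card_le_card (Finset.subset_univ Y)
  have hXm : (X.card : ℝ) ≤ m := by exact_mod_cast hXm'
  have hYm : (Y.card : ℝ) ≤ m := by exact_mod_cast hYm'
  have hX0 : (0:ℝ) ≤ X.card := Nat.cast_nonneg _
  have hY0 : (0:ℝ) ≤ Y.card := Nat.cast_nonneg _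
  have hm0 : (0:ℝ) ≤ m := Nat.cast_nonneg _
  have he0 : (0:ℝ) ≤ (eBip G X Y : ℝ) := Nat.cast_nonneg _
  have hXc : ((Xᶜ : Finset (Fin m)).card : ℝ) = m - X.card := by
    rw [Finset.card_compl, Fintype.card_fin, Nat.cast_sub hXm']
  have hYc : ((Yᶜ : Finset (Fin m)).card : ℝ) = m - Y.card := by
    rw [Finset.card_compl, Fintype.card_fin, Nat.cast_sub hYm']
  by_cases hs : (X.card : ℝ) + (Y.card : ℝ) - m ≤ 0
  · have h1 : (0:ℝ) ≤ (1 - 4*lam) * m * q :=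
      mul_nonneg (mul_nonneg (by linarith) hm0) hq.le
    nlinarith [mul_nonneg h1 (neg_nonneg.2 hs)]
  push_neg at hs
  by_cases hkx : k ≤ X.card
  · by_cases hky : k ≤ Y.card
    · have h := hi X Y hkx hky
      have h1 : (0:ℝ) ≤ q * (1 - 2*lam) * ((m - X.card) * (m - Y.card)) :=
        mul_nonneg (mul_nonneg hq.le (by linarith))
          (mul_nonneg (by linarith) (by linarith))
      have h2 : (0:ℝ) ≤ (m * q) * (2 * lam * ((X.card:ℝ) + Y.card - m)) :=
        mul_nonneg (mul_nonneg hm0 hq.le) (mul_nonneg (by linarith) hs.le)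
      nlinarith [h, h1, h2]
    · -- Y small: use degrees on B side, and hii on Xᶜ × Y
      push_neg at hky
      have hwlt : ((Xᶜ : Finset (Fin m)).card : ℝ) < Y.card := by rw [hXc]; linarith
      have hwk : (Xᶜ : Finset (Fin m)).card ≤ k := by
        have : (Xᶜ : Finset (Fin m)).card < Y.card := by exact_mod_cast hwlt
        omega
      have h2 := hii Xᶜ Y hwk (le_of_lt hky)
      have hmin : ((min (Xᶜ : Finset (Fin m)).card Y.card : ℕ) : ℝ) ≤ ((Xᶜ : Finset (Fin m)).card : ℝ) := by
        exact_mod_cast Nat.cast_le.mpr (min_le_left _ _)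
      have hw0 : (0:ℝ) ≤ ((Xᶜ : Finset (Fin m)).card : ℝ) := Nat.cast_nonneg _
      have h2' : (eBip G Xᶜ Y : ℝ) ≤ ((Xᶜ : Finset (Fin m)).card : ℝ) * (lam * m * q) := by
        calc (eBip G Xᶜ Y : ℝ) ≤ ((min (Xᶜ : Finset (Fin m)).card Y.card : ℕ) : ℝ) * c := h2
          _ ≤ ((Xᶜ : Finset (Fin m)).card : ℝ) * c := mul_le_mul_of_nonneg_right hmin hc.le
          _ ≤ ((Xᶜ : Finset (Fin m)).card : ℝ) * (lam * m * q) := mul_le_mul_of_nonneg_left hlmq hw0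
      have hdegsum : (Y.card : ℝ) * ((1 - 2*lam) * m * q) ≤ ∑ b ∈ Y, (degB G b : ℝ) := by
        have := Finset.card_nsmul_le_sum Y (fun b => (degB G b:ℝ)) _ (fun b _ => hiii' b)
        simpa [nsmul_eq_mul, mul_comm] using this
      have hsplit : (eBip G X Y : ℝ) + (eBip G Xᶜ Y : ℝ) = ∑ b ∈ Y, (degB G b : ℝ) := by
        have h := eBip_compl_left G X Y
        rw [← Nat.cast_add, h, Nat.cast_sum]
      have hint1 : (0:ℝ) ≤ (m*q) * (lam * ((Y.card:ℝ) - ((Xᶜ : Finset (Fin m)).card : ℝ))) :=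
        mul_nonneg (mul_nonneg hm0 hq.le) (mul_nonneg hlam1.le (by linarith))
      have hint2 : (0:ℝ) ≤ (m*q) * ((1 - 3*lam) * ((Xᶜ : Finset (Fin m)).card : ℝ)) :=
        mul_nonneg (mul_nonneg hm0 hq.le) (mul_nonneg (by linarith) hw0)
      have hx : (X.card:ℝ) = m - ((Xᶜ : Finset (Fin m)).card : ℝ) := by linarith [hXc]
      have key : (1-4*lam)*m*q*((X.card:ℝ)+Y.card-m)
          ≤ (Y.card:ℝ)*((1-2*lam)*m*q) - ((Xᶜ : Finset (Fin m)).card : ℝ)*(lam*m*q) := by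
        rw [hx]; linarith [hint1, hint2]
      linarith [key, hsplit, hdegsum, h2']
  · -- X small
    push_neg at hkx
    have hwlt : ((Yᶜ : Finset (Fin m)).card : ℝ) < X.card := by rw [hYc]; linarith
    have hwk : (Yᶜ : Finset (Fin m)).card ≤ k := by
      have : (Yᶜ : Finset (Fin m)).card < X.card := by exact_mod_cast hwlt
      omega
    have h2 := hii X Yᶜ (le_of_lt hkx) hwk
    have hmin : ((min X.card (Yᶜ : Finset (Fin m)).card : ℕ) : ℝ) ≤ ((Yᶜ : Finset (Fin m)).card : ℝ) := by
      exact_mod_cast Nat.cast_le.mpr (min_le_right _ _)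
    have hw0 : (0:ℝ) ≤ ((Yᶜ : Finset (Fin m)).card : ℝ) := Nat.cast_nonneg _
    have h2' : (eBip G X Yᶜ : ℝ) ≤ ((Yᶜ : Finset (Fin m)).card : ℝ) * (lam * m * q) := by
      calc (eBip G X Yᶜ : ℝ) ≤ ((min X.card (Yᶜ : Finset (Fin m)).card : ℕ) : ℝ) * c := h2
        _ ≤ ((Yᶜ : Finset (Fin m)).card : ℝ) * c := mul_le_mul_of_nonneg_right hmin hc.le
        _ ≤ ((Yᶜ : Finset (Fin m)).card : ℝ) * (lam * m * q) := mul_le_mul_of_nonneg_left hlmq hw0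
    have hdegsum : (X.card : ℝ) * ((1 - 2*lam) * m * q) ≤ ∑ a ∈ X, (degA G a : ℝ) := by
      have := Finset.card_nsmul_le_sum X (fun a => (degA G a:ℝ)) _ (fun a _ => hiii a)
      simpa [nsmul_eq_mul, mul_comm] using this
    have hsplit : (eBip G X Y : ℝ) + (eBip G X Yᶜ : ℝ) = ∑ a ∈ X, (degA G a : ℝ) := by
      have h := eBip_compl_right G X Y
      rw [← Nat.cast_add, h, Nat.cast_sum]
    have hint1 : (0:ℝ) ≤ (m*q) * (lam * ((X.card:ℝ) - ((Yᶜ : Finset (Fin m)).card : ℝ))) :=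
      mul_nonneg (mul_nonneg hm0 hq.le) (mul_nonneg hlam1.le (by linarith))
    have hint2 : (0:ℝ) ≤ (m*q) * ((1 - 3*lam) * ((Yᶜ : Finset (Fin m)).card : ℝ)) :=
      mul_nonneg (mul_nonneg hm0 hq.le) (mul_nonneg (by linarith) hw0)
    have hy : (Y.card:ℝ) = m - ((Yᶜ : Finset (Fin m)).card : ℝ) := by linarith [hYc]
    have key : (1-4*lam)*m*q*((X.card:ℝ)+Y.card-m)
        ≤ (X.card:ℝ)*((1-2*lam)*m*q) - ((Yᶜ : Finset (Fin m)).card : ℝ)*(lam*m*q) := by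
      rw [hy]; linarith [hint1, hint2]
    linarith [key, hsplit, hdegsum, h2']


lemma exists_pm {m : ℕ} (H : Fin m → Fin m → Bool)
    (hall : ∀ S : Finset (Fin m),
      S.card ≤ (S.biUnion (fun a => univ.filter (fun b => H a b = true))).card) :
    ∃ σ : Fin m → Fin m, Function.Injective σ ∧ ∀ a, H a (σ a) = true := by
  obtain ⟨f, hinj, hmem⟩ :=
    (Finset.all_card_le_biUnion_card_iff_exists_injective
      (fun a => univ.filter (fun b => H a b = true))).1 hall
  exact ⟨f, hinj, fun a => by simpa using hmem a⟩

lemma regular_hall {m r : ℕ} (hr : 0 < r) (H : Fin m → Fin m → Bool)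
    (hA : ∀ a, degA H a = r) (hB : ∀ b, degB H b = r) (S : Finset (Fin m)) :
    S.card ≤ (S.biUnion (fun a => univ.filter (fun b => H a b = true))).card := by
  set N := S.biUnion (fun a => univ.filter (fun b => H a b = true)) with hN
  have hzero : eBip H S Nᶜ = 0 := by
    rw [eBip, Finset.card_eq_zero, Finset.filter_eq_empty_iff]
    rintro ⟨a, b⟩ hab
    simp only [Finset.mem_product, Finset.mem_compl] at hab
    intro hG
    exact hab.2 (Finset.mem_biUnion.2 ⟨a, hab.1, by simp [hG]⟩)
  have h1 : eBip H S N = r * S.card := by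
    have := eBip_compl_right H S N
    rw [hzero] at this
    simp only [add_zero] at this
    rw [this, Finset.sum_congr rfl (fun a _ => hA a), Finset.sum_const, smul_eq_mul, mul_comm]
  have h2 : eBip H S N ≤ r * N.card := by
    have hle : eBip H S N ≤ eBip H univ N := by
      apply Finset.card_le_card
      apply Finset.filter_subset_filter
      exact Finset.product_subset_product (Finset.subset_univ S) le_rfl
    have heq : eBip H univ N + eBip H (univ : Finset (Fin m))ᶜ N = ∑ b ∈ N, degB H b :=
      eBip_compl_left H univ N
    rw [Finset.compl_univ] at heq
    have : eBip H (∅ : Finset (Fin m)) N = 0 := by simp [eBip]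
    rw [this, add_zero] at heq
    rw [heq, Finset.sum_congr rfl (fun b _ => hB b), Finset.sum_const, smul_eq_mul, mul_comm] at hle
    exact hle
  have := h1 ▸ h2
  exact Nat.le_of_mul_le_mul_left this hr

lemma regular_decomp {m : ℕ} : ∀ (r : ℕ) (H : Fin m → Fin m → Bool),
    (∀ a, degA H a = r) → (∀ b, degB H b = r) →
    ∃ Φ : Fin r → (Fin m → Fin m),
      (∀ i, Function.Injective (Φ i)) ∧
      (∀ i a, H a (Φ i a) = true) ∧
      (∀ i j, i ≠ j → ∀ a, Φ i a ≠ Φ j a) := by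
  intro r
  induction r with
  | zero =>
    intro H _ _
    exact ⟨fun i => i.elim0, fun i => i.elim0, fun i => i.elim0, fun i => i.elim0⟩
  | succ r ih =>
    intro H hA hB
    obtain ⟨σ, hinj, hσ⟩ := exists_pm H (regular_hall (Nat.succ_pos r) H hA hB)
    have hbij : Function.Bijective σ := Finite.injective_iff_bijective.1 hinj
    set H' : Fin m → Fin m → Bool := fun a b => H a b && decide (σ a ≠ b) with hH'
    have hA' : ∀ a, degA H' a = r := by
      intro a
      have hset : (univ.filter fun b => H' a b = true)
          = (univ.filter fun b => H a b = true).erase (σ a) := by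
        ext b
        simp only [hH', Finset.mem_erase, Finset.mem_filter, Finset.mem_univ, true_and,
          Bool.and_eq_true, decide_eq_true_eq]
        constructor
        · rintro ⟨h1, h2⟩; exact ⟨Ne.symm h2, h1⟩
        · rintro ⟨h1, h2⟩; exact ⟨h2, Ne.symm h1⟩
      rw [degA, hset, Finset.card_erase_of_mem (by simp [hσ a])]
      have : #(filter (fun b => H a b = true) univ) = r + 1 := hA a
      omega
    have hB' : ∀ b, degB H' b = r := by
      intro b
      obtain ⟨a₀, ha₀⟩ := hbij.2 b
      have hset : (univ.filter fun a => H' a b = true)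
          = (univ.filter fun a => H a b = true).erase a₀ := by
        ext a
        simp only [hH', Finset.mem_erase, Finset.mem_filter, Finset.mem_univ, true_and,
          Bool.and_eq_true, decide_eq_true_eq]
        constructor
        · rintro ⟨h1, h2⟩
          exact ⟨fun h => h2 (h ▸ ha₀), h1⟩
        · rintro ⟨h1, h2⟩
          exact ⟨h2, fun h => h1 (hinj (h.trans ha₀.symm))⟩
      rw [degB, hset, Finset.card_erase_of_mem (by simp [← ha₀, hσ a₀])]
      have : #(filter (fun a => H a b = true) univ) = r + 1 := hB b
      omega
    obtain ⟨Φ', hΦinj, hΦmem, hΦdisj⟩ := ih H' hA' hB'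
    refine ⟨Fin.cons σ Φ', ?_, ?_, ?_⟩
    · intro i
      refine Fin.cases ?_ ?_ i
      · simpa using hinj
      · intro j; simpa using hΦinj j
    · intro i a
      refine Fin.cases ?_ ?_ i
      · simpa using hσ a
      · intro j
        have := hΦmem j a
        simp only [hH', Bool.and_eq_true] at this
        simpa using this.1
    · have hne : ∀ (j' : Fin r) (a : Fin m), σ a ≠ Φ' j' a := by
        intro j' a
        have := hΦmem j' a
        simp only [hH', Bool.and_eq_true, decide_eq_true_eq] at this
        exact this.2
      intro i j hij a
      induction i using Fin.cases with
      | zero =>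
        induction j using Fin.cases with
        | zero => exact absurd rfl hij
        | succ j' => simpa using hne j' a
      | succ i' =>
        induction j using Fin.cases with
        | zero => simpa using (hne i' a).symm
        | succ j' =>
          have h' : i' ≠ j' := fun h => hij (congrArg Fin.succ h)
          simpa using hΦdisj i' j' h' a


abbrev EdgeT {m : ℕ} (G : Fin m → Fin m → Bool) := {p : Fin m × Fin m // G p.1 p.2 = true}

/-- The Tutte-style gadget graph for finding an `r`-regular subgraph. -/
def gadget {m r : ℕ} (G : Fin m → Fin m → Bool) :
    (Fin m × Fin r) ⊕ EdgeT G → Finset ((Fin m × Fin r) ⊕ EdgeT G)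
  | Sum.inl p => (univ.filter fun e : EdgeT G => e.1.1 = p.1).image Sum.inr
  | Sum.inr e => insert (Sum.inr e) ((univ : Finset (Fin r)).image fun j => Sum.inl (e.1.2, j))

lemma gadget_hall {m r : ℕ} (G : Fin m → Fin m → Bool)
    (hGR : ∀ X Y : Finset (Fin m), r * X.card + r * Y.card ≤ eBip G X Y + r * m)
    (S : Finset ((Fin m × Fin r) ⊕ EdgeT G)) :
    S.card ≤ (S.biUnion (gadget G)).card := by
  classical
  set X : Finset (Fin m) := univ.filter (fun a => ∃ i, Sum.inl (a, i) ∈ S) with hX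
  set Q : Finset (EdgeT G) := univ.filter (fun e => Sum.inr e ∈ S) with hQ
  set T : Finset (Fin m) := Q.image (fun e => e.1.2) with hT
  set EX : Finset (EdgeT G) := univ.filter (fun e => e.1.1 ∈ X) with hEX
  -- (1)  |S| ≤ r|X| + |Q|
  have h1 : S.card ≤ r * X.card + Q.card := by
    have hsplit := Finset.card_filter_add_card_filter_not
      (s := S) (p := fun x => x.isLeft = true)
    have hleft : S.filter (fun x => x.isLeft = true)
        ⊆ (X ×ˢ (univ : Finset (Fin r))).image Sum.inl := by
      intro x hx
      rcases x with ⟨a, i⟩ | e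
      · simp only [Finset.mem_image, Finset.mem_product, Finset.mem_univ, and_true]
        refine ⟨(a, i), ?_, rfl⟩
        simp only [hX, Finset.mem_filter, Finset.mem_univ, true_and]
        exact ⟨i, (Finset.mem_filter.1 hx).1⟩
      · simp at hx
    have hright : S.filter (fun x => ¬ x.isLeft = true) ⊆ Q.image Sum.inr := by
      intro x hx
      rcases x with ⟨a, i⟩ | e
      · simp at hx
      · simp only [Finset.mem_image]
        exact ⟨e, by simp [hQ, (Finset.mem_filter.1 hx).1], rfl⟩
    have c1 : (S.filter (fun x => x.isLeft = true)).card ≤ r * X.card := by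
      calc (S.filter (fun x => x.isLeft = true)).card
          ≤ ((X ×ˢ (univ : Finset (Fin r))).image Sum.inl).card := Finset.card_le_card hleft
        _ ≤ (X ×ˢ (univ : Finset (Fin r))).card := Finset.card_image_le
        _ = r * X.card := by rw [Finset.card_product]; simp [mul_comm]
    have c2 : (S.filter (fun x => ¬ x.isLeft = true)).card ≤ Q.card := by
      calc (S.filter (fun x => ¬ x.isLeft = true)).card
          ≤ (Q.image Sum.inr).card := Finset.card_le_card hright
        _ ≤ Q.card := Finset.card_image_le
    omega
  -- (2)  r|T| + |EX ∪ Q| ≤ |N|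
  have h2 : r * T.card + (EX ∪ Q).card ≤ (S.biUnion (gadget G)).card := by
    have hNB : (T ×ˢ (univ : Finset (Fin r))).image Sum.inl ⊆ S.biUnion (gadget G) := by
      intro x hx
      simp only [Finset.mem_image, Finset.mem_product, Finset.mem_univ, and_true] at hx
      obtain ⟨⟨b, j⟩, hb, rfl⟩ := hx
      obtain ⟨e, heQ, hbe⟩ := Finset.mem_image.1 hb
      refine Finset.mem_biUnion.2 ⟨Sum.inr e, (Finset.mem_filter.1 heQ).2, ?_⟩
      simp only [gadget, Finset.mem_insert, Finset.mem_image, Finset.mem_univ, true_and]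
      exact Or.inr ⟨j, by rw [hbe]⟩
    have hNU : (EX ∪ Q).image Sum.inr ⊆ S.biUnion (gadget G) := by
      intro x hx
      simp only [Finset.mem_image] at hx
      obtain ⟨e, he, rfl⟩ := hx
      rcases Finset.mem_union.1 he with he | he
      · have haX : e.1.1 ∈ X := (Finset.mem_filter.1 he).2
        obtain ⟨i, hi⟩ := (Finset.mem_filter.1 haX).2
        refine Finset.mem_biUnion.2 ⟨Sum.inl (e.1.1, i), hi, ?_⟩
        simp only [gadget, Finset.mem_image]
        exact ⟨e, by simp, rfl⟩
      · exact Finset.mem_biUnion.2 ⟨Sum.inr e, (Finset.mem_filter.1 he).2, by simp [gadget]⟩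
    have hdisj : Disjoint ((T ×ˢ (univ : Finset (Fin r))).image Sum.inl)
        ((EX ∪ Q).image Sum.inr) := by
      rw [Finset.disjoint_left]
      intro x hx hx'
      obtain ⟨p, _, rfl⟩ := Finset.mem_image.1 hx
      obtain ⟨e, _, h⟩ := Finset.mem_image.1 hx'
      exact absurd h (by simp)
    have hsub : ((T ×ˢ (univ : Finset (Fin r))).image Sum.inl) ∪ ((EX ∪ Q).image Sum.inr)
        ⊆ S.biUnion (gadget G) := Finset.union_subset hNB hNU
    have hcard := Finset.card_le_card hsub
    rw [Finset.card_union_of_disjoint hdisj,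
      Finset.card_image_of_injective _ Sum.inl_injective,
      Finset.card_image_of_injective _ Sum.inr_injective,
      Finset.card_product] at hcard
    simp only [Finset.card_univ, Fintype.card_fin] at hcard
    rw [mul_comm]
    exact hcard
  -- (3)  |EX ∪ Q| ≥ |Q| + e(X, Tᶜ)
  have h3 : Q.card + eBip G X Tᶜ ≤ (EX ∪ Q).card := by
    have hunion : (EX \ Q) ∪ Q = EX ∪ Q := Finset.sdiff_union_self_eq_union
    have hcard : (EX ∪ Q).card = (EX \ Q).card + Q.card := by
      rw [← hunion, Finset.card_union_of_disjoint Finset.sdiff_disjoint]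
    have hsub : ((X ×ˢ Tᶜ).filter fun p => G p.1 p.2 = true)
        ⊆ (EX \ Q).image (fun e => e.1) := by
      intro p hp
      obtain ⟨hpm, hpg⟩ := Finset.mem_filter.1 hp
      obtain ⟨hp1, hp2⟩ := Finset.mem_product.1 hpm
      refine Finset.mem_image.2 ⟨⟨p, hpg⟩, ?_, rfl⟩
      rw [Finset.mem_sdiff]
      constructor
      · simp only [hEX, Finset.mem_filter, Finset.mem_univ, true_and]
        exact hp1
      · intro hQmem
        have : p.2 ∈ T := Finset.mem_image.2 ⟨⟨p, hpg⟩, hQmem, rfl⟩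
        exact (Finset.mem_compl.1 hp2) this
    have : eBip G X Tᶜ ≤ ((EX \ Q).image (fun e => e.1)).card :=
      Finset.card_le_card hsub
    rw [Finset.card_image_of_injective _ Subtype.val_injective] at this
    omega
  -- (4)  combine with Gale–Ryser condition
  have h6 : T.card + Tᶜ.card = m := by
    rw [Finset.card_add_card_compl]; simp
  have h5 := hGR X Tᶜ
  have h6' : r * T.card + r * Tᶜ.card = r * m := by
    rw [← Nat.left_distrib, h6]
  calc S.card ≤ r * X.card + Q.card := h1
    _ ≤ r * T.card + (EX ∪ Q).card := by 
        have := h5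
        omega
    _ ≤ (S.biUnion (gadget G)).card := h2


lemma gale_ryser {m : ℕ} (G : Fin m → Fin m → Bool) (r : ℕ)
    (hGR : ∀ X Y : Finset (Fin m), r * X.card + r * Y.card ≤ eBip G X Y + r * m) :
    ∃ G' : Fin m → Fin m → Bool, (∀ a b, G' a b = true → G a b = true) ∧
      (∀ a, degA G' a = r) ∧ (∀ b, degB G' b = r) := by
  classical
  obtain ⟨f, hinj, hmem⟩ :=
    (Finset.all_card_le_biUnion_card_iff_exists_injective (gadget (r := r) G)).1
      (gadget_hall G hGR)
  have hbij : Function.Bijective f := Finite.injective_iff_bijective.1 hinj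
  have hA : ∀ (a : Fin m) (i : Fin r), ∃ e : EdgeT G, e.1.1 = a ∧
      f (Sum.inl (a, i)) = Sum.inr e := by
    intro a i
    have h := hmem (Sum.inl (a, i))
    simp only [gadget, Finset.mem_image, Finset.mem_filter, Finset.mem_univ, true_and] at h
    obtain ⟨e, he1, he2⟩ := h
    exact ⟨e, he1, he2.symm⟩
  have hBalt : ∀ e : EdgeT G, f (Sum.inr e) = Sum.inr e ∨
      ∃ j, f (Sum.inr e) = Sum.inl (e.1.2, j) := by
    intro e
    have h := hmem (Sum.inr e)
    simp only [gadget, Finset.mem_insert, Finset.mem_image, Finset.mem_univ, true_and] at h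
    rcases h with h | ⟨j, hj⟩
    · exact Or.inl h
    · exact Or.inr ⟨j, hj.symm⟩
  set G' : Fin m → Fin m → Bool := fun a b =>
    decide (∃ h : G a b = true, ∃ i : Fin r, f (Sum.inl (a, i)) = Sum.inr ⟨(a, b), h⟩)
    with hG'
  have hG'iff : ∀ a b, G' a b = true ↔
      ∃ h : G a b = true, ∃ i : Fin r, f (Sum.inl (a, i)) = Sum.inr ⟨(a, b), h⟩ := by
    intro a b; simp [hG']
  have hsub : ∀ a b, G' a b = true → G a b = true := by
    intro a b h
    exact ((hG'iff a b).1 h).1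
  have hkey : ∀ (a b : Fin m) (h : G a b = true), G' a b = true ↔
      ∃ j : Fin r, f (Sum.inr ⟨(a, b), h⟩) = Sum.inl (b, j) := by
    intro a b h
    constructor
    · intro hg
      obtain ⟨h', i, hi⟩ := (hG'iff a b).1 hg
      have hne : f (Sum.inr (⟨(a, b), h⟩ : EdgeT G)) ≠ Sum.inr ⟨(a, b), h⟩ := by
        intro heq
        have : (Sum.inl (a, i) : (Fin m × Fin r) ⊕ EdgeT G) = Sum.inr ⟨(a, b), h⟩ :=
          hinj (by rw [hi, heq])
        simp at this
      rcases hBalt ⟨(a, b), h⟩ with h' | ⟨j, hj⟩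
      · exact absurd h' hne
      · exact ⟨j, hj⟩
    · rintro ⟨j, hj⟩
      obtain ⟨x, hx⟩ := hbij.2 (Sum.inr ⟨(a, b), h⟩)
      rcases x with ⟨a', i⟩ | e'
      · obtain ⟨e, he1, he2⟩ := hA a' i
        rw [hx] at he2
        have hee : (⟨(a, b), h⟩ : EdgeT G) = e := Sum.inr_injective he2
        have ha' : a = a' := by rw [← he1, ← hee]
        subst ha'
        exact (hG'iff a b).2 ⟨h, i, hx⟩
      · rcases hBalt e' with h' | ⟨j', hj'⟩
        · rw [hx] at h'
          have : e' = ⟨(a, b), h⟩ := (Sum.inr_injective h').symm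
          subst this
          rw [hx] at hj
          simp at hj
        · rw [hx] at hj'
          simp at hj'
  refine ⟨G', hsub, ?_, ?_⟩
  · -- degree in A
    intro a
    choose ea hea1 hfea using hA a
    set g : Fin r → Fin m := fun i => (ea i).1.2 with hgdef
    have hgG : ∀ i, G a (g i) = true := by
      intro i
      have h2 := (ea i).2
      rw [hea1 i] at h2
      exact h2
    have heaeq : ∀ i, ea i = ⟨(a, g i), hgG i⟩ := by
      intro i
      exact Subtype.ext (Prod.ext (hea1 i) rfl)
    have hginj : Function.Injective g := by
      intro i j hij
      have he : ea i = ea j := by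
        rw [heaeq i, heaeq j]
        exact Subtype.ext (Prod.ext rfl hij)
      have h2 : f (Sum.inl (a, i)) = f (Sum.inl (a, j)) := by
        rw [hfea i, hfea j, he]
      have := hinj h2
      simpa using this
    have hset : (univ.filter fun b => G' a b = true) = univ.image g := by
      ext b
      simp only [Finset.mem_filter, Finset.mem_univ, true_and, Finset.mem_image]
      constructor
      · intro hb
        obtain ⟨h, i, hi⟩ := (hG'iff a b).1 hb
        refine ⟨i, ?_⟩
        have he : ea i = ⟨(a, b), h⟩ := Sum.inr_injective ((hfea i).symm.trans hi)
        simp [hgdef, he]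
      · rintro ⟨i, rfl⟩
        refine (hG'iff a (g i)).2 ⟨hgG i, i, ?_⟩
        rw [hfea i, heaeq i]
    rw [degA, hset, Finset.card_image_of_injective _ hginj]
    simp
  · -- degree in B
    intro b
    have hg : ∀ j : Fin r, ∃ e : EdgeT G, e.1.2 = b ∧ f (Sum.inr e) = Sum.inl (b, j) := by
      intro j
      obtain ⟨x, hx⟩ := hbij.2 (Sum.inl (b, j))
      rcases x with ⟨a', i⟩ | e
      · obtain ⟨e, he1, he2⟩ := hA a' i
        rw [hx] at he2
        simp at he2
      · rcases hBalt e with h' | ⟨j', hj'⟩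
        · rw [hx] at h'
          simp at h'
        · refine ⟨e, ?_, hx⟩
          rw [hx] at hj'
          have := Sum.inl_injective hj'
          exact ((Prod.ext_iff.1 this).1).symm
    choose eb heb hfeb using hg
    set g : Fin r → Fin m := fun j => (eb j).1.1 with hgdef
    have hgG : ∀ j, G (g j) b = true := by
      intro j
      have h2 := (eb j).2
      rw [heb j] at h2
      exact h2
    have hebeq : ∀ j, eb j = ⟨(g j, b), hgG j⟩ := by
      intro j
      exact Subtype.ext (Prod.ext rfl (heb j))
    have hginj : Function.Injective g := by
      intro i j hij
      have he : eb i = eb j := by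
        rw [hebeq i, hebeq j]
        exact Subtype.ext (Prod.ext hij rfl)
      have h2 : (Sum.inl (b, i) : (Fin m × Fin r) ⊕ EdgeT G) = Sum.inl (b, j) := by
        rw [← hfeb i, ← hfeb j, he]
      simpa using h2
    have hset : (univ.filter fun a => G' a b = true) = univ.image g := by
      ext a
      simp only [Finset.mem_filter, Finset.mem_univ, true_and, Finset.mem_image]
      constructor
      · intro ha
        have h := hsub a b ha
        obtain ⟨j, hj⟩ := (hkey a b h).1 ha
        refine ⟨j, ?_⟩
        have he : eb j = ⟨(a, b), h⟩ :=
          Sum.inr_injective (hinj ((hfeb j).trans hj.symm))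
        simp [hgdef, he]
      · rintro ⟨j, rfl⟩
        refine (hkey (g j) b (hgG j)).2 ⟨j, ?_⟩
        rw [← hebeq j]
        exact hfeb j
    rw [degB, hset, Finset.card_image_of_injective _ hginj]
    simp


/-- **A Gale–Ryser-type condition for pseudo-random bipartite graphs.**  Under the
hypotheses (i)–(iii), the Gale–Ryser condition `e_G(X,Y) ≥ r(|X|+|Y|−m)` holds for
`r = (1−4λ)mq`; consequently, if `r` is an integer, `G` contains an `r`-regular spanning
subgraph and hence `r` pairwise edge-disjoint perfect matchings. -/
theorem gale_ryser_condition_and_matchings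
    (m k : ℕ) (hm : 0 < m) (hk : 0 < k)
    (q c lam : ℝ) (hq : 0 < q) (hc : 0 < c) (hlam1 : 0 < lam) (hlam2 : lam ≤ 1 / 4)
    (hlmq : c ≤ lam * m * q)
    (G : Fin m → Fin m → Bool)
    (hi : ∀ X Y : Finset (Fin m), k ≤ X.card → k ≤ Y.card →
      (1 - 2 * lam) * X.card * Y.card * q ≤ (eBip G X Y : ℝ))
    (hii : ∀ X Y : Finset (Fin m), X.card ≤ k → Y.card ≤ k →
      (eBip G X Y : ℝ) ≤ (min X.card Y.card : ℕ) * c)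
    (hiii : ∀ a : Fin m, (1 - 2 * lam) * m * q ≤ (degA G a : ℝ))
    (hiii' : ∀ b : Fin m, (1 - 2 * lam) * m * q ≤ (degB G b : ℝ)) :
    (∀ X Y : Finset (Fin m),
      (1 - 4 * lam) * m * q * ((X.card : ℝ) + (Y.card : ℝ) - m) ≤ (eBip G X Y : ℝ)) ∧
    (∀ r : ℕ, (r : ℝ) = (1 - 4 * lam) * m * q →
      ∃ G' : Fin m → Fin m → Bool,
        (∀ a b, G' a b = true → G a b = true) ∧
        (∀ a, degA G' a = r) ∧ (∀ b, degB G' b = r) ∧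
        ∃ Φ : Fin r → (Fin m → Fin m),
          (∀ i, Function.Injective (Φ i)) ∧
          (∀ i a, G' a (Φ i a) = true) ∧
          (∀ i j, i ≠ j → ∀ a, Φ i a ≠ Φ j a)) := by
  have hP1 := part1 m k q c lam hq hc hlam1 hlam2 hlmq G hi hii hiii hiii'
  refine ⟨hP1, ?_⟩
  intro r hr
  have hGR : ∀ X Y : Finset (Fin m), r * X.card + r * Y.card ≤ eBip G X Y + r * m := by
    intro X Y
    have h := hP1 X Y
    rw [← hr] at h
    have h2 : ((r * X.card + r * Y.card : ℕ) : ℝ) ≤ ((eBip G X Y + r * m : ℕ) : ℝ) := by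
      push_cast
      nlinarith [h]
    exact_mod_cast h2
  obtain ⟨G', hsub, hdA, hdB⟩ := gale_ryser G r hGR
  obtain ⟨Φ, h1, h2, h3⟩ := regular_decomp r G' hdA hdB
  exact ⟨G', hsub, hdA, hdB, Φ, h1, h2, h3⟩
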